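/- Optimality from the Skorokhod-type solution: let η_t := max_{0≤v≤t} L_v for t ∈ {0,...,N-1}, let Y_t := E_t[Σ_{u=t}^{N-1} η_u + X_N] for t ∈ {0,...,N-1} and Y_N := X_N, and define the stopping times τ̲ := min{ v ∈ {0,...,N-1} : η_v ≥ 0 } ∧ N and τ̄ := min{ v ∈ {0,...,N-1} : η_v > 0 } ∧ N. If a stopping time τ* ∈ T_{0,N} satisfies τ̲ ≤ τ* ≤ τ̄ a.s. and Y_{τ*} = X_{τ*} a.s., then τ* maximizes the reward: for every stopping time τ ∈ T_{0,N}, E_0[X_τ] ≤ E_0[X_{τ*}] a.s. -/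

import Mathlib

open MeasureTheory Filter

/-- Running maximum `max_{t ≤ v ≤ u} L v ω` (intended for `t ≤ u`). -/
noncomputable def runMax {Ω : Type*} (L : ℕ → Ω → ℝ) (t u : ℕ) (ω : Ω) : ℝ :=
  (Finset.Icc t u).fold max (L t ω) fun v => L v ω

/-- Running minimum `min_{t ≤ v ≤ u} K v ω` (intended for `t ≤ u`). -/
noncomputable def runMin {Ω : Type*} (K : ℕ → Ω → ℝ) (t u : ℕ) (ω : Ω) : ℝ :=
  (Finset.Icc t u).fold min (K t ω) fun v => K v ω

/-- A discrete-time nonlinear expectation on the horizon `{0, ..., N}`: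
a family of maps `E t` sending square-integrable `F N`-measurable random
variables to square-integrable `F t`-measurable random variables, satisfying
monotonicity, strict monotonicity, translation invariance, the tower property,
the zero-one law and monotone convergence. -/
structure NLExp {Ω : Type*} {m0 : MeasurableSpace Ω} (μ : Measure Ω)
    (F : Filtration ℕ m0) (N : ℕ) where
  E : ℕ → (Ω → ℝ) → Ω → ℝ
  adapted : ∀ t, t ≤ N → ∀ ξ : Ω → ℝ, StronglyMeasurable[F N] ξ → MemLp ξ 2 μ →
    StronglyMeasurable[F t] (E t ξ)
  sqInt : ∀ t, t ≤ N → ∀ ξ : Ω → ℝ, StronglyMeasurable[F N] ξ → MemLp ξ 2 μ →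
    MemLp (E t ξ) 2 μ
  mono : ∀ t, t ≤ N → ∀ ξ η : Ω → ℝ, StronglyMeasurable[F N] ξ → MemLp ξ 2 μ →
    StronglyMeasurable[F N] η → MemLp η 2 μ → ξ ≤ᵐ[μ] η → E t ξ ≤ᵐ[μ] E t η
  strictMono : ∀ t, t ≤ N → ∀ ξ η : Ω → ℝ, StronglyMeasurable[F N] ξ → MemLp ξ 2 μ →
    StronglyMeasurable[F N] η → MemLp η 2 μ → ξ ≤ᵐ[μ] η →
    0 < μ {ω | ξ ω < η ω} → 0 < μ {ω | E t ξ ω < E t η ω}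
  translation : ∀ t, t ≤ N → ∀ ξ ζ : Ω → ℝ, StronglyMeasurable[F N] ξ → MemLp ξ 2 μ →
    StronglyMeasurable[F t] ζ → MemLp ζ 2 μ → E t (ξ + ζ) =ᵐ[μ] E t ξ + ζ
  tower : ∀ s t, s ≤ t → t ≤ N → ∀ ξ : Ω → ℝ, StronglyMeasurable[F N] ξ → MemLp ξ 2 μ →
    E s (E t ξ) =ᵐ[μ] E s ξ
  zeroOne : ∀ t, t ≤ N → ∀ ξ η : Ω → ℝ, StronglyMeasurable[F N] ξ → MemLp ξ 2 μ →
    StronglyMeasurable[F N] η → MemLp η 2 μ → ∀ A : Set Ω, MeasurableSet[F t] A →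
    E t (A.indicator ξ + Aᶜ.indicator η) =ᵐ[μ]
      A.indicator (E t ξ) + Aᶜ.indicator (E t η)
  monoConv : ∀ t, t ≤ N → ∀ (ξs : ℕ → Ω → ℝ) (ξ : Ω → ℝ),
    (∀ n, StronglyMeasurable[F N] (ξs n)) → (∀ n, MemLp (ξs n) 2 μ) →
    StronglyMeasurable[F N] ξ → MemLp ξ 2 μ →
    (∀ᵐ ω ∂μ, (Monotone fun n => ξs n ω) ∨ (Antitone fun n => ξs n ω)) →
    (∀ᵐ ω ∂μ, Tendsto (fun n => ξs n ω) atTop (nhds (ξ ω))) →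
    ∀ᵐ ω ∂μ, Tendsto (fun n => E t (ξs n) ω) atTop (nhds (E t ξ ω))

/-!
Write `ξ_t := ∑_{u=t}^{N-1} max_{t≤v≤u} L_v + X_N` and `ζ_t := ∑_{u=t}^{N-1} η_u + X_N`, so that
`X_t = E_t[ξ_t]` and `Y_t = E_t[ζ_t]`. The zero-one law and the tower property give
`E_0[E_σ[ξ_σ]] = E_0[ξ_σ]` at every stopping time `σ ≤ N`, hence `E_0[X_τ] = E_0[ξ_τ]` and
`E_0[X_{τ*}] = E_0[Y_{τ*}] = E_0[ζ_{τ*}]`. Pathwise `ξ_τ ≤ ζ_τ ≤ ζ_{τ*}`: a running maximum started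
at `t` is dominated by the one started at `0`, and since `η` is nondecreasing with `τ̲ ≤ τ* ≤ τ̄`,
`η_u ≤ 0` for `u < τ*` and `η_u ≥ 0` for `u ≥ τ*`, so the tail sum of `η` from `τ*` is the
largest. Monotonicity of `E_0` concludes.
-/

section RunMax

variable {Ω : Type*} {L : ℕ → Ω → ℝ} {s t u : ℕ} {ω : Ω}

lemma le_runMax {v : ℕ} (htv : t ≤ v) (hvu : v ≤ u) : L v ω ≤ runMax L t u ω :=
  (Finset.le_fold_max _).2 (Or.inr ⟨v, Finset.mem_Icc.2 ⟨htv, hvu⟩, le_rfl⟩)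

lemma runMax_le {c : ℝ} (ht : L t ω ≤ c) (h : ∀ v, t ≤ v → v ≤ u → L v ω ≤ c) :
    runMax L t u ω ≤ c :=
  (Finset.fold_max_le _).2 ⟨ht, fun v hv => h v (Finset.mem_Icc.1 hv).1 (Finset.mem_Icc.1 hv).2⟩

lemma runMax_self : runMax L t t ω = L t ω :=
  le_antisymm (runMax_le le_rfl fun v h₁ h₂ => by rw [le_antisymm h₂ h₁]) (le_runMax le_rfl le_rfl)

lemma runMax_anti_left (hst : s ≤ t) (htu : t ≤ u) : runMax L t u ω ≤ runMax L s u ω :=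
  runMax_le (le_runMax hst htu) fun _ h₁ h₂ => le_runMax (hst.trans h₁) h₂

lemma runMax_mono_right {u' : ℕ} (htu : t ≤ u) (huu' : u ≤ u') :
    runMax L t u ω ≤ runMax L t u' ω :=
  runMax_le (le_runMax le_rfl (htu.trans huu')) fun _ h₁ h₂ => le_runMax h₁ (h₂.trans huu')

lemma runMax_eq_max_runMax_succ (htu : t < u) :
    runMax L t u ω = max (L t ω) (runMax L (t + 1) u ω) := by
  refine le_antisymm (runMax_le (le_max_left _ _) fun v h₁ h₂ => ?_)
    (max_le (le_runMax le_rfl htu.le) (runMax_anti_left t.le_succ htu))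
  rcases h₁.eq_or_lt with rfl | h₁
  · exact le_max_left _ _
  · exact (le_runMax h₁ h₂).trans (le_max_right _ _)

lemma runMax_induction (P : (Ω → ℝ) → Prop) (hP : ∀ f g, P f → P g → P (f ⊔ g))
    (htu : t ≤ u) (hL : ∀ v, t ≤ v → v ≤ u → P (L v)) : P (runMax L t u) := by
  suffices ∀ S ⊆ Finset.Icc t u, P fun ω => S.fold max (L t ω) fun v => L v ω from
    this _ subset_rfl
  intro S
  induction S using Finset.induction_on with
  | empty => exact fun _ => hL t le_rfl htu
  | insert a S ha ih =>
    intro hS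
    have ha' := Finset.mem_Icc.1 (hS (Finset.mem_insert_self a S))
    simp only [Finset.fold_insert ha]
    exact hP _ _ (hL a ha'.1 ha'.2) (ih ((Finset.subset_insert a S).trans hS))

lemma sum_Ico_runMax_eq (htN : t < N) : ∑ u ∈ Finset.Ico t N, runMax L t u ω =
    L t ω + ∑ u ∈ Finset.Ico (t + 1) N, max (L t ω) (runMax L (t + 1) u ω) := by
  rw [Finset.sum_eq_sum_Ico_succ_bot htN, runMax_self]
  congr 1
  exact Finset.sum_congr rfl fun u hu => runMax_eq_max_runMax_succ (Finset.mem_Ico.1 hu).1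

end RunMax

lemma sum_Ico_le_sum_Ico_of_nonpos_of_nonneg {a : ℕ → ℝ} {N s t : ℕ} (ht : t ≤ N) (hs : s ≤ N)
    (hneg : ∀ u < s, a u ≤ 0) (hpos : ∀ u, s ≤ u → u < N → 0 ≤ a u) :
    ∑ u ∈ Finset.Ico t N, a u ≤ ∑ u ∈ Finset.Ico s N, a u := by
  rcases le_total t s with hts | hst
  · rw [← Finset.sum_Ico_consecutive a hts hs]
    have := Finset.sum_nonpos fun u (hu : u ∈ Finset.Ico t s) => hneg u (Finset.mem_Ico.1 hu).2
    linarith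
  · rw [← Finset.sum_Ico_consecutive a hst ht]
    have := Finset.sum_nonneg fun u (hu : u ∈ Finset.Ico s t) =>
      hpos u (Finset.mem_Ico.1 hu).1 ((Finset.mem_Ico.1 hu).2.trans_le ht)
    linarith

section FirstHit

variable {p : ℕ → Prop} {N u : ℕ}

lemma not_of_lt_sInf_first_hit (hu : u < sInf ({v | v < N ∧ p v} ∪ {N})) (huN : u < N) : ¬p u :=
  fun h => (Nat.sInf_le (Or.inl ⟨huN, h⟩)).not_gt hu

lemma exists_le_of_sInf_first_hit_le (hu : sInf ({v | v < N ∧ p v} ∪ {N}) ≤ u) (huN : u < N) :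
    ∃ v ≤ u, p v := by
  obtain ⟨-, hp⟩ | hN := Nat.sInf_mem (s := {v | v < N ∧ p v} ∪ {N}) ⟨N, Or.inr rfl⟩
  · exact ⟨_, hu, hp⟩
  · exact absurd (hN ▸ hu) huN.not_ge

end FirstHit

lemma sum_runMax_le_of_between {Ω : Type*} {L : ℕ → Ω → ℝ} {ω : Ω} {N s t : ℕ} (ht : t ≤ N)
    (hs : s ≤ N) (hlow : sInf ({v | v < N ∧ 0 ≤ runMax L 0 v ω} ∪ {N}) ≤ s)
    (hbar : s ≤ sInf ({v | v < N ∧ 0 < runMax L 0 v ω} ∪ {N})) :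
    ∑ u ∈ Finset.Ico t N, runMax L t u ω ≤ ∑ u ∈ Finset.Ico s N, runMax L 0 u ω :=
  calc ∑ u ∈ Finset.Ico t N, runMax L t u ω ≤ ∑ u ∈ Finset.Ico t N, runMax L 0 u ω :=
        Finset.sum_le_sum fun u hu => runMax_anti_left t.zero_le (Finset.mem_Ico.1 hu).1
    _ ≤ ∑ u ∈ Finset.Ico s N, runMax L 0 u ω := by
      refine sum_Ico_le_sum_Ico_of_nonpos_of_nonneg ht hs
        (fun u hu => not_lt.1 (not_of_lt_sInf_first_hit (hu.trans_le hbar) (hu.trans_le hs)))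
        fun u hsu huN => ?_
      obtain ⟨v, hvu, hv⟩ := exists_le_of_sInf_first_hit_le (hlow.trans hsu) huN
      exact hv.trans (runMax_mono_right v.zero_le hvu)

lemma le_sub_sum_of_eq_add_sum_max {ι : Type*} {s : Finset ι} {x S : ℝ} {r : ι → ℝ}
    (hS : S = x + ∑ i ∈ s, max x (r i)) : x ≤ S - ∑ i ∈ s, r i := by
  have := Finset.sum_le_sum fun i (_ : i ∈ s) => le_max_right x (r i)
  linarith

lemma sub_sum_max_le_of_eq_add_sum_max {ι : Type*} {s : Finset ι} {x S : ℝ} {r : ι → ℝ}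
    (hS : S = x + ∑ i ∈ s, max x (r i)) : S - ∑ i ∈ s, max (S - ∑ j ∈ s, r j) (r i) ≤ x := by
  have := Finset.sum_le_sum fun i (_ : i ∈ s) =>
    max_le_max_right (r i) (le_sub_sum_of_eq_add_sum_max hS)
  linarith

lemma memLp_of_le_of_le {α : Type*} {m : MeasurableSpace α} {μ : Measure α} {p : ENNReal}
    {f g h : α → ℝ} (hf : MemLp f p μ) (hh : MemLp h p μ) (hg : AEStronglyMeasurable g μ)
    (hfg : f ≤ᵐ[μ] g) (hgh : g ≤ᵐ[μ] h) : MemLp g p μ := by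
  refine (hf.norm.add hh.norm).mono' hg ?_
  filter_upwards [hfg, hgh] with x h₁ h₂
  simp only [Real.norm_eq_abs, Pi.add_apply]
  exact abs_le.2 ⟨by linarith [neg_abs_le (f x), abs_nonneg (h x)],
    by linarith [le_abs_self (h x), abs_nonneg (f x)]⟩

/-- With `S_t := ∑_{u=t}^{N-1} max_{t≤v≤u} L_v`, `D := S_t - S_{t+1}` and `R_u := max_{t<v≤u} L_v`,
`S_t - ∑_u max(D, R_u) ≤ L_t ≤ D`, and both bounds only involve `L_v` for `v > t`. -/
theorem memLp_of_memLp_sum_runMax {Ω : Type*} {m : MeasurableSpace Ω} {μ : Measure Ω}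
    {p : ENNReal} {N : ℕ} {L : ℕ → Ω → ℝ} (hL : ∀ t < N, AEStronglyMeasurable (L t) μ)
    (hS : ∀ t < N, MemLp (fun ω => ∑ u ∈ Finset.Ico t N, runMax L t u ω) p μ) :
    ∀ t < N, MemLp (L t) p μ := by
  intro t
  induction t using Nat.strong_decreasing_induction with
  | base => exact ⟨N, fun t ht htN => absurd htN (by omega)⟩
  | step t ih =>
    intro htN
    have hR : ∀ u ∈ Finset.Ico (t + 1) N, MemLp (runMax L (t + 1) u) p μ := fun u hu =>
      runMax_induction (MemLp · p μ) (fun _ _ => MemLp.sup) (Finset.mem_Ico.1 hu).1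
        fun v hv hvu => ih v (by omega) (by grind)
    have hD : MemLp (fun ω => (∑ u ∈ Finset.Ico t N, runMax L t u ω) -
        ∑ u ∈ Finset.Ico (t + 1) N, runMax L (t + 1) u ω) p μ :=
      (hS t htN).sub (memLp_finsetSum _ hR)
    refine memLp_of_le_of_le ((hS t htN).sub (memLp_finsetSum _ fun u hu => hD.sup (hR u hu)))
      hD (hL t htN) (Eventually.of_forall fun ω => sub_sum_max_le_of_eq_add_sum_max ?_)
      (Eventually.of_forall fun ω => le_sub_sum_of_eq_add_sum_max ?_) <;>
    exact sum_Ico_runMax_eq htN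

lemma stronglyMeasurable_sum_runMax_add {Ω : Type*} {m : MeasurableSpace Ω} {N s t : ℕ}
    {L : ℕ → Ω → ℝ} {X : Ω → ℝ} (hL : ∀ v < N, StronglyMeasurable[m] (L v))
    (hX : StronglyMeasurable[m] X) (hst : s ≤ t) :
    StronglyMeasurable[m] fun ω => (∑ u ∈ Finset.Ico t N, runMax L s u ω) + X ω := by
  refine (Finset.stronglyMeasurable_fun_sum _ fun u hu => ?_).add hX
  exact runMax_induction _ (fun _ _ => StronglyMeasurable.sup) (hst.trans (Finset.mem_Ico.1 hu).1)
    fun v _ hvu => hL v (hvu.trans_lt (Finset.mem_Ico.1 hu).2)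

lemma memLp_sum_runMax_add {Ω : Type*} {m : MeasurableSpace Ω} {μ : Measure Ω} {p : ENNReal}
    {N s t : ℕ} {L : ℕ → Ω → ℝ} {X : Ω → ℝ} (hL : ∀ v < N, MemLp (L v) p μ)
    (hX : MemLp X p μ) (hst : s ≤ t) :
    MemLp (fun ω => (∑ u ∈ Finset.Ico t N, runMax L s u ω) + X ω) p μ := by
  refine (memLp_finsetSum _ fun u hu => ?_).add hX
  exact runMax_induction (MemLp · p μ) (fun _ _ => MemLp.sup)
    (hst.trans (Finset.mem_Ico.1 hu).1) fun v _ hvu => hL v (hvu.trans_lt (Finset.mem_Ico.1 hu).2)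

section Stopped

variable {Ω : Type*} {m0 : MeasurableSpace Ω} {μ : Measure Ω} {F : Filtration ℕ m0} {N : ℕ}

lemma stopped_eq_sum_indicator {β : Type*} [AddCommMonoid β] {σ : Ω → ℕ} (hσN : ∀ ω, σ ω ≤ N)
    (f : ℕ → Ω → β) :
    (fun ω => f (σ ω) ω) =
      ∑ t ∈ Finset.range (N + 1), {ω | (σ ω : WithTop ℕ) = t}.indicator (f t) :=
  stoppedValue_eq_of_mem_finset (u := f) (τ := fun ω => (σ ω : WithTop ℕ))
    fun ω => ⟨σ ω, Finset.mem_range_succ_iff.2 (hσN ω), rfl⟩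

lemma stronglyMeasurable_stopped {σ : Ω → ℕ} (hσ : IsStoppingTime F fun ω => (σ ω : WithTop ℕ))
    (hσN : ∀ ω, σ ω ≤ N) {f : ℕ → Ω → ℝ} (hf : ∀ t ≤ N, StronglyMeasurable[F N] (f t)) :
    StronglyMeasurable[F N] fun ω => f (σ ω) ω := by
  rw [stopped_eq_sum_indicator hσN]
  refine Finset.stronglyMeasurable_sum _ fun t ht => ?_
  rw [Finset.mem_range_succ_iff] at ht
  exact (hf t ht).indicator (F.mono ht _ (hσ.measurableSet_eq t))

lemma memLp_stopped {σ : Ω → ℕ} (hσ : IsStoppingTime F fun ω => (σ ω : WithTop ℕ))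
    (hσN : ∀ ω, σ ω ≤ N) {p} {f : ℕ → Ω → ℝ} (hf : ∀ t ≤ N, MemLp (f t) p μ) :
    MemLp (fun ω => f (σ ω) ω) p μ := by
  rw [stopped_eq_sum_indicator hσN]
  refine memLp_finsetSum' _ fun t ht => ?_
  exact (hf t (Finset.mem_range_succ_iff.1 ht)).indicator (F.le t _ (hσ.measurableSet_eq t))

lemma stopped_ae_eq {β : Type*} {σ : Ω → ℕ} (hσN : ∀ ω, σ ω ≤ N) {f g : ℕ → Ω → β}
    (h : ∀ t ≤ N, f t =ᵐ[μ] g t) : (fun ω => f (σ ω) ω) =ᵐ[μ] fun ω => g (σ ω) ω := by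
  have : ∀ᵐ ω ∂μ, ∀ t ≤ N, f t ω = g t ω := (ae_ball_iff (Set.finite_Iic N).countable).2 h
  filter_upwards [this] with ω hω using hω _ (hσN ω)

end Stopped

namespace NLExp

variable {Ω : Type*} {m0 : MeasurableSpace Ω} {μ : Measure Ω} {F : Filtration ℕ m0} {N : ℕ}
  (EE : NLExp μ F N)

lemma E_zero {t : ℕ} (ht : t ≤ N) : EE.E t 0 =ᵐ[μ] 0 := by
  have h0m : StronglyMeasurable[F N] (0 : Ω → ℝ) := stronglyMeasurable_const
  have h_transl := EE.translation t ht 0 (EE.E t 0) h0m MemLp.zero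
    (EE.adapted t ht 0 h0m MemLp.zero) (EE.sqInt t ht 0 h0m MemLp.zero)
  rw [zero_add] at h_transl
  filter_upwards [h_transl, EE.tower t t le_rfl ht 0 h0m MemLp.zero] with ω h1 h2
  simp only [Pi.add_apply] at h1
  simp only [Pi.zero_apply]
  linarith

lemma E_eq_self {t : ℕ} (ht : t ≤ N) {f : Ω → ℝ} (hm : StronglyMeasurable[F t] f)
    (hp : MemLp f 2 μ) : EE.E t f =ᵐ[μ] f := by
  have h_transl := EE.translation t ht 0 f stronglyMeasurable_const MemLp.zero hm hp
  rw [zero_add] at h_transl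
  filter_upwards [h_transl, EE.E_zero ht] with ω h1 h2
  simp [h1, h2]

lemma E_congr {t : ℕ} (ht : t ≤ N) {f g : Ω → ℝ}
    (hfm : StronglyMeasurable[F N] f) (hfp : MemLp f 2 μ)
    (hgm : StronglyMeasurable[F N] g) (hgp : MemLp g 2 μ) (h : f =ᵐ[μ] g) :
    EE.E t f =ᵐ[μ] EE.E t g :=
  (EE.mono t ht f g hfm hfp hgm hgp h.le).antisymm (EE.mono t ht g f hgm hgp hfm hfp h.symm.le)

lemma ae_E_eq_of_eqOn {t : ℕ} (ht : t ≤ N) {A : Set Ω} (hA : MeasurableSet[F t] A) {f g : Ω → ℝ}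
    (hfm : StronglyMeasurable[F N] f) (hfp : MemLp f 2 μ)
    (hgm : StronglyMeasurable[F N] g) (hgp : MemLp g 2 μ) (h : Set.EqOn f g A) :
    ∀ᵐ ω ∂μ, ω ∈ A → EE.E t f ω = EE.E t g ω := by
  have hg : A.indicator f + Aᶜ.indicator g = g := by
    rw [Set.indicator_congr h, Set.indicator_self_add_compl]
  have h01 := EE.zeroOne t ht f g hfm hfp hgm hgp A hA
  rw [hg] at h01
  filter_upwards [h01] with ω hω hωA
  simp [hω, hωA]

lemma E_congr_of_E_congr {s t : ℕ} (hst : s ≤ t) (ht : t ≤ N) {f g : Ω → ℝ}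
    (hfm : StronglyMeasurable[F N] f) (hfp : MemLp f 2 μ)
    (hgm : StronglyMeasurable[F N] g) (hgp : MemLp g 2 μ) (h : EE.E t f =ᵐ[μ] EE.E t g) :
    EE.E s f =ᵐ[μ] EE.E s g := by
  have hE_m : ∀ φ, StronglyMeasurable[F N] φ → MemLp φ 2 μ → StronglyMeasurable[F N] (EE.E t φ) :=
    fun φ hm hp => (EE.adapted t ht φ hm hp).mono (F.mono ht)
  calc EE.E s f =ᵐ[μ] EE.E s (EE.E t f) := (EE.tower s t hst ht f hfm hfp).symm
    _ =ᵐ[μ] EE.E s (EE.E t g) := EE.E_congr (hst.trans ht) (hE_m f hfm hfp)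
        (EE.sqInt t ht f hfm hfp) (hE_m g hgm hgp) (EE.sqInt t ht g hgm hgp) h
    _ =ᵐ[μ] EE.E s g := EE.tower s t hst ht g hgm hgp

theorem tower_stopped {σ : Ω → ℕ} (hσ : IsStoppingTime F fun ω => (σ ω : WithTop ℕ))
    (hσN : ∀ ω, σ ω ≤ N) {ξ : ℕ → Ω → ℝ} (hξm : ∀ t ≤ N, StronglyMeasurable[F N] (ξ t))
    (hξp : ∀ t ≤ N, MemLp (ξ t) 2 μ) :
    EE.E 0 (fun ω => EE.E (σ ω) (ξ (σ ω)) ω) =ᵐ[μ] EE.E 0 fun ω => ξ (σ ω) ω := by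
  -- `g 0 = ξ_σ`, `g (N + 1) = E_σ ξ_σ`, and `g k`, `g (k + 1)` differ only on `{σ = k} ∈ F k`
  let g : ℕ → Ω → ℝ := fun k ω => (if σ ω < k then EE.E (σ ω) (ξ (σ ω)) else ξ (σ ω)) ω
  have hg : ∀ k, StronglyMeasurable[F N] (g k) ∧ MemLp (g k) 2 μ := fun k => by
    have h : ∀ t ≤ N, StronglyMeasurable[F N] (if t < k then EE.E t (ξ t) else ξ t) ∧
        MemLp (if t < k then EE.E t (ξ t) else ξ t) 2 μ := fun t ht => by
      split_ifs
      · exact ⟨(EE.adapted t ht _ (hξm t ht) (hξp t ht)).mono (F.mono ht),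
          EE.sqInt t ht _ (hξm t ht) (hξp t ht)⟩
      · exact ⟨hξm t ht, hξp t ht⟩
    exact ⟨stronglyMeasurable_stopped hσ hσN fun t ht => (h t ht).1,
      memLp_stopped hσ hσN fun t ht => (h t ht).2⟩
  have step : ∀ k ≤ N, EE.E k (g (k + 1)) =ᵐ[μ] EE.E k (g k) := fun k hk => by
    have hA : MeasurableSet[F k] {ω | σ ω = k} := by simpa using hσ.measurableSet_eq k
    have off_A := EE.ae_E_eq_of_eqOn hk hA.compl (hg (k + 1)).1 (hg (k + 1)).2 (hg k).1 (hg k).2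
      fun ω (hω : σ ω ≠ k) => by simp only [g]; grind
    have on_A_succ := EE.ae_E_eq_of_eqOn hk hA (hg (k + 1)).1 (hg (k + 1)).2
      ((EE.adapted k hk _ (hξm k hk) (hξp k hk)).mono (F.mono hk))
      (EE.sqInt k hk _ (hξm k hk) (hξp k hk)) fun ω (hω : σ ω = k) => by simp [g, hω]
    have on_A := EE.ae_E_eq_of_eqOn hk hA (hg k).1 (hg k).2 (hξm k hk) (hξp k hk)
      fun ω (hω : σ ω = k) => by simp [g, hω]
    filter_upwards [off_A, on_A_succ, on_A, EE.tower k k le_rfl hk _ (hξm k hk) (hξp k hk)]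
      with ω h_off h_succ h_on h_tower
    by_cases hω : σ ω = k
    · rw [h_succ hω, h_on hω, h_tower]
    · exact h_off hω
  have chain : ∀ k ≤ N + 1, EE.E 0 (g k) =ᵐ[μ] EE.E 0 (g 0) := by
    intro k
    induction k with
    | zero => exact fun _ => EventuallyEq.rfl
    | succ k ih => exact fun hk => (EE.E_congr_of_E_congr k.zero_le (by omega) (hg _).1 (hg _).2
        (hg _).1 (hg _).2 (step k (by omega))).trans (ih (by omega))
  have hg0 : g 0 = fun ω => ξ (σ ω) ω := by simp [g]
  have hgN : g (N + 1) = fun ω => EE.E (σ ω) (ξ (σ ω)) ω := by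
    funext ω; simp [g, Nat.lt_succ_of_le (hσN ω)]
  rw [← hg0, ← hgN]
  exact chain (N + 1) le_rfl

theorem E_congr_stopped {σ : Ω → ℕ} (hσ : IsStoppingTime F fun ω => (σ ω : WithTop ℕ))
    (hσN : ∀ ω, σ ω ≤ N) {ξ : ℕ → Ω → ℝ} (hξm : ∀ t ≤ N, StronglyMeasurable[F N] (ξ t))
    (hξp : ∀ t ≤ N, MemLp (ξ t) 2 μ) {Z : Ω → ℝ} (hZm : StronglyMeasurable[F N] Z)
    (hZp : MemLp Z 2 μ) (hZ : Z =ᵐ[μ] fun ω => EE.E (σ ω) (ξ (σ ω)) ω) :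
    EE.E 0 Z =ᵐ[μ] EE.E 0 fun ω => ξ (σ ω) ω :=
  (EE.E_congr N.zero_le hZm hZp
    (stronglyMeasurable_stopped hσ hσN fun t ht =>
      (EE.adapted t ht _ (hξm t ht) (hξp t ht)).mono (F.mono ht))
    (memLp_stopped hσ hσN fun t ht => EE.sqInt t ht _ (hξm t ht) (hξp t ht)) hZ).trans
    (EE.tower_stopped hσ hσN hξm hξp)

lemma ae_eq_E_sum_add (a : ℕ → ℕ → Ω → ℝ) {X : Ω → ℝ} (hXm : StronglyMeasurable[F N] X)
    (hXp : MemLp X 2 μ) {V : ℕ → Ω → ℝ}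
    (hV : ∀ t < N, V t =ᵐ[μ] EE.E t fun ω => (∑ u ∈ Finset.Ico t N, a t u ω) + X ω)
    (hVN : V N = X) :
    ∀ t ≤ N, V t =ᵐ[μ] EE.E t fun ω => (∑ u ∈ Finset.Ico t N, a t u ω) + X ω := by
  intro t ht
  rcases ht.lt_or_eq with ht | rfl
  · exact hV t ht
  · simpa [hVN] using (EE.E_eq_self le_rfl hXm hXp).symm

end NLExp

theorem skorokhod_solution_optimality_general
{Ω : Type*}
    [m0 : MeasurableSpace Ω]
    (μ : Measure Ω)
    (F : Filtration ℕ m0) (N : ℕ)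
    (EE : NLExp μ F N)
(X : ℕ → Ω → ℝ)
    (hX_adapted : ∀ t, t ≤ N → StronglyMeasurable[F t] (X t))
    (hX_sqInt : ∀ t, t ≤ N → MemLp (X t) 2 μ)
(L : ℕ → Ω → ℝ)
    (hL_adapted : ∀ t, t < N → StronglyMeasurable[F t] (L t))
    (hL_sqInt : ∀ t, t < N →
      MemLp (fun ω => ∑ u ∈ Finset.Ico t N, runMax L t u ω) 2 μ)
    (hL_rep : ∀ t, t < N →
      X t =ᵐ[μ] EE.E t fun ω => (∑ u ∈ Finset.Ico t N, runMax L t u ω) + X N ω)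
(Y : ℕ → Ω → ℝ)
    (hY_def : ∀ t, t < N →
      Y t = EE.E t fun ω => (∑ u ∈ Finset.Ico t N, runMax L 0 u ω) + X N ω)
    (hY_N : Y N = X N)
    (τlow τbar : Ω → ℕ)
    (hτlow_def : ∀ ω, τlow ω = sInf ({v | v < N ∧ 0 ≤ runMax L 0 v ω} ∪ {N}))
    (hτbar_def : ∀ ω, τbar ω = sInf ({v | v < N ∧ 0 < runMax L 0 v ω} ∪ {N}))
    (τstar : Ω → ℕ) (hτstar : IsStoppingTime F (fun ω => (τstar ω : WithTop ℕ))) (hτstar_le : ∀ ω, τstar ω ≤ N)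
    (hbetween : ∀ᵐ ω ∂μ, τlow ω ≤ τstar ω ∧ τstar ω ≤ τbar ω)
    (hhit : ∀ᵐ ω ∂μ, Y (τstar ω) ω = X (τstar ω) ω) :
    ∀ τ : Ω → ℕ, IsStoppingTime F (fun ω => (τ ω : WithTop ℕ)) → (∀ ω, τ ω ≤ N) →
      EE.E 0 (fun ω => X (τ ω) ω) ≤ᵐ[μ] EE.E 0 fun ω => X (τstar ω) ω := by
  intro τ hτ hτN
  let ξ : ℕ → Ω → ℝ := fun t ω => (∑ u ∈ Finset.Ico t N, runMax L t u ω) + X N ω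
  let ζ : ℕ → Ω → ℝ := fun t ω => (∑ u ∈ Finset.Ico t N, runMax L 0 u ω) + X N ω
  have hXm : ∀ t ≤ N, StronglyMeasurable[F N] (X t) := fun t ht =>
    (hX_adapted t ht).mono (F.mono ht)
  have hLm : ∀ v < N, StronglyMeasurable[F N] (L v) := fun v hv =>
    (hL_adapted v hv).mono (F.mono hv.le)
  have hLp := memLp_of_memLp_sum_runMax
    (fun v hv => ((hL_adapted v hv).mono (F.le v)).aestronglyMeasurable) hL_sqInt
  have hξm : ∀ t ≤ N, StronglyMeasurable[F N] (ξ t) := fun _ _ =>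
    stronglyMeasurable_sum_runMax_add hLm (hXm N le_rfl) le_rfl
  have hξp : ∀ t ≤ N, MemLp (ξ t) 2 μ := fun _ _ =>
    memLp_sum_runMax_add hLp (hX_sqInt N le_rfl) le_rfl
  have hζm : ∀ t ≤ N, StronglyMeasurable[F N] (ζ t) := fun t _ =>
    stronglyMeasurable_sum_runMax_add hLm (hXm N le_rfl) t.zero_le
  have hζp : ∀ t ≤ N, MemLp (ζ t) 2 μ := fun t _ =>
    memLp_sum_runMax_add hLp (hX_sqInt N le_rfl) t.zero_le
  have hX_rep := EE.ae_eq_E_sum_add _ (hXm N le_rfl) (hX_sqInt N le_rfl) hL_rep rfl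
  have hY_rep := EE.ae_eq_E_sum_add (fun _ u => runMax L 0 u) (hXm N le_rfl) (hX_sqInt N le_rfl)
    (fun t ht => (hY_def t ht).eventuallyEq) hY_N
  have hτ_val := EE.E_congr_stopped hτ hτN hξm hξp (stronglyMeasurable_stopped hτ hτN hXm)
    (memLp_stopped hτ hτN hX_sqInt) (stopped_ae_eq hτN hX_rep)
  have hτstar_val := EE.E_congr_stopped hτstar hτstar_le hζm hζp
    (stronglyMeasurable_stopped hτstar hτstar_le hXm) (memLp_stopped hτstar hτstar_le hX_sqInt)
    ((EventuallyEq.symm hhit).trans (stopped_ae_eq hτstar_le hY_rep))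
  have hmono := EE.mono 0 N.zero_le _ _ (stronglyMeasurable_stopped hτ hτN hξm)
    (memLp_stopped hτ hτN hξp) (stronglyMeasurable_stopped hτstar hτstar_le hζm)
    (memLp_stopped hτstar hτstar_le hζp) <| by
      filter_upwards [hbetween] with ω ⟨hlow, hbar⟩
      exact add_le_add_left (sum_runMax_le_of_between (hτN ω) (hτstar_le ω)
        (hτlow_def ω ▸ hlow) (hτbar_def ω ▸ hbar)) _
  filter_upwards [hτ_val, hτstar_val, hmono] with ω h₁ h₂ h₃
  rwa [h₁, h₂]

/-- **Optimality from the Skorokhod-type solution.** With `η_t := max_{0≤v≤t} L_v`,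
`Y_t := E t [∑_{u=t}^{N-1} η_u + X_N]` (`Y_N := X_N`), and the level-passage times
`τ̲ := min{ v < N : η_v ≥ 0 } ∧ N`, `τ̄ := min{ v < N : η_v > 0 } ∧ N`, any stopping
time `τ*` with `τ̲ ≤ τ* ≤ τ̄` a.s. and `Y_{τ*} = X_{τ*}` a.s. maximizes the reward:
`E 0 [X_τ] ≤ E 0 [X_{τ*}]` a.s. for every stopping time `τ ∈ T_{0,N}`. -/
theorem skorokhod_solution_optimality
{Ω : Type*} [TopologicalSpace Ω] [PolishSpace Ω]
    [m0 : MeasurableSpace Ω] [BorelSpace Ω]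
    (μ : Measure Ω) [IsProbabilityMeasure μ]
    (F : Filtration ℕ m0) (N : ℕ) (hN : 1 ≤ N)
    (EE : NLExp μ F N)
(X : ℕ → Ω → ℝ)
    (hX_adapted : ∀ t, t ≤ N → StronglyMeasurable[F t] (X t))
    (hX_sqInt : ∀ t, t ≤ N → MemLp (X t) 2 μ)
(L : ℕ → Ω → ℝ)
    (hL_adapted : ∀ t, t < N → StronglyMeasurable[F t] (L t))
    (hL_sqInt : ∀ t, t < N →
      MemLp (fun ω => ∑ u ∈ Finset.Ico t N, runMax L t u ω) 2 μ)
    (hL_rep : ∀ t, t < N →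
      X t =ᵐ[μ] EE.E t fun ω => (∑ u ∈ Finset.Ico t N, runMax L t u ω) + X N ω)
(Y : ℕ → Ω → ℝ)
    (hY_def : ∀ t, t < N →
      Y t = EE.E t fun ω => (∑ u ∈ Finset.Ico t N, runMax L 0 u ω) + X N ω)
    (hY_N : Y N = X N)
    (τlow τbar : Ω → ℕ)
    (hτlow_def : ∀ ω, τlow ω = sInf ({v | v < N ∧ 0 ≤ runMax L 0 v ω} ∪ {N}))
    (hτbar_def : ∀ ω, τbar ω = sInf ({v | v < N ∧ 0 < runMax L 0 v ω} ∪ {N}))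
    (τstar : Ω → ℕ) (hτstar : IsStoppingTime F (fun ω => (τstar ω : WithTop ℕ))) (hτstar_le : ∀ ω, τstar ω ≤ N)
    (hbetween : ∀ᵐ ω ∂μ, τlow ω ≤ τstar ω ∧ τstar ω ≤ τbar ω)
    (hhit : ∀ᵐ ω ∂μ, Y (τstar ω) ω = X (τstar ω) ω) :
    ∀ τ : Ω → ℕ, IsStoppingTime F (fun ω => (τ ω : WithTop ℕ)) → (∀ ω, τ ω ≤ N) →
      EE.E 0 (fun ω => X (τ ω) ω) ≤ᵐ[μ] EE.E 0 fun ω => X (τstar ω) ω :=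
  skorokhod_solution_optimality_general (m0 := m0) μ F N EE X hX_adapted hX_sqInt L hL_adapted
    hL_sqInt hL_rep Y hY_def hY_N τlow τbar hτlow_def hτbar_def τstar hτstar hτstar_le hbetween hhit
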